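/- arXiv:2501.11181 — 5 statements merged into one kernel-verified Lean document; each statement's English description precedes it below -/
import Mathlib

section
/- Let a, b > 0 and define the densities f_1(u) = (Γ(a+b+1)/(Γ(a+1)Γ(b))) u^a (1-u)^{b-1} and f_0(u) = (Γ(a+b+1)/(Γ(a)Γ(b+1))) u^{a-1} (1-u)^b for u ∈ (0,1), where Γ is the real Gamma function. Then the Bhattacharyya coefficient φ = ∫_0^1 √(f_1(u) f_0(u)) du satisfies φ = (Γ(a + 1/2)/(√a · Γ(a))) · (Γ(b + 1/2)/(√b · Γ(b))). -/
open MeasureTheory Real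

/-! `√(f₁ f₀)` is a constant times `u^(a - 1/2) (1 - u)^(b - 1/2)`, so `φ` is a multiple of the
Beta integral `B(a + 1/2, b + 1/2) = Γ(a + 1/2) Γ(b + 1/2) / Γ(a + b + 1)`. Since
`Γ(a + 1) = a Γ(a)` and `Γ(b + 1) = b Γ(b)`, that constant is
`Γ(a + b + 1) / (√a Γ(a) · √b Γ(b))`, and the factors `Γ(a + b + 1)` cancel. -/

theorem setIntegral_Ioo_rpow_mul_one_sub_rpow {p q : ℝ} (hp : 0 < p) (hq : 0 < q) :
    ∫ x in Set.Ioo (0 : ℝ) 1, x ^ (p - 1) * (1 - x) ^ (q - 1) = ProbabilityTheory.beta p q := by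
  rw [ProbabilityTheory.beta_eq_betaIntegralReal p q hp hq, Complex.betaIntegral,
    intervalIntegral.integral_of_le zero_le_one, ← integral_Ioc_eq_integral_Ioo,
    ← RCLike.re_to_complex, ← integral_re]
  · refine setIntegral_congr_fun measurableSet_Ioc fun x ⟨hx₀, hx₁⟩ ↦ ?_
    norm_cast
    rw [← Complex.ofReal_cpow hx₀.le, ← Complex.ofReal_cpow (sub_nonneg.2 hx₁),
      RCLike.re_to_complex, ← Complex.ofReal_mul, Complex.ofReal_re]
  · exact (Complex.betaIntegral_convergent (by simpa) (by simpa)).1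

theorem sqrt_mul_rpow_mul_rpow {c d x y : ℝ} (hcd : 0 ≤ c * d) (hx : 0 < x) (hy : 0 < y)
    (p q r s : ℝ) :
    √((c * x ^ p * y ^ q) * (d * x ^ r * y ^ s))
      = √(c * d) * (x ^ ((p + r) / 2) * y ^ ((q + s) / 2)) := by
  have hsq : x ^ ((p + r) / 2) * y ^ ((q + s) / 2) * (x ^ ((p + r) / 2) * y ^ ((q + s) / 2))
      = x ^ p * x ^ r * (y ^ q * y ^ s) := by
    rw [mul_mul_mul_comm, ← rpow_add hx, ← rpow_add hy, ← rpow_add hx, ← rpow_add hy]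
    ring_nf
  calc √((c * x ^ p * y ^ q) * (d * x ^ r * y ^ s))
      = √(c * d) * √((x ^ ((p + r) / 2) * y ^ ((q + s) / 2)) ^ 2) := by
        rw [← sqrt_mul hcd, sq, hsq]
        ring_nf
    _ = _ := by rw [sqrt_sq (by positivity)]

theorem sqrt_Gamma_div_mul_Gamma_div {C x y : ℝ} (hC : 0 ≤ C) (hx : 0 < x) (hy : 0 < y) :
    √(C / (Gamma (x + 1) * Gamma y) * (C / (Gamma x * Gamma (y + 1))))
      = C / (√x * Gamma x * (√y * Gamma y)) := by
  have hΓx := Gamma_pos_of_pos hx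
  have hΓy := Gamma_pos_of_pos hy
  rw [Gamma_add_one hx.ne', Gamma_add_one hy.ne',
    sqrt_eq_iff_eq_sq (by positivity) (by positivity)]
  field_simp
  rw [sq_sqrt hx.le, sq_sqrt hy.le]

/-- The Bhattacharyya coefficient between the Beta(a+1, b) density `f₁` and the
Beta(a, b+1) density `f₀` on (0,1) has the closed form
`Γ(a + 1/2)/(√a Γ(a)) · Γ(b + 1/2)/(√b Γ(b))`. -/
theorem bhattacharyya_beta_closed_form (a b : ℝ) (ha : 0 < a) (hb : 0 < b) :
    ∫ u in Set.Ioo (0 : ℝ) 1,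
        Real.sqrt
          ((Real.Gamma (a + b + 1) / (Real.Gamma (a + 1) * Real.Gamma b)
              * u ^ a * (1 - u) ^ (b - 1))
            * (Real.Gamma (a + b + 1) / (Real.Gamma a * Real.Gamma (b + 1))
              * u ^ (a - 1) * (1 - u) ^ b))
      = (Real.Gamma (a + 1 / 2) / (Real.sqrt a * Real.Gamma a))
          * (Real.Gamma (b + 1 / 2) / (Real.sqrt b * Real.Gamma b)) := by
  have hΓ : 0 < Gamma (a + b + 1) := Gamma_pos_of_pos (by linarith)
  have hpointwise : ∀ u ∈ Set.Ioo (0 : ℝ) 1,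
      √((Gamma (a + b + 1) / (Gamma (a + 1) * Gamma b) * u ^ a * (1 - u) ^ (b - 1))
          * (Gamma (a + b + 1) / (Gamma a * Gamma (b + 1)) * u ^ (a - 1) * (1 - u) ^ b))
        = Gamma (a + b + 1) / (√a * Gamma a * (√b * Gamma b))
          * (u ^ (a + 1 / 2 - 1) * (1 - u) ^ (b + 1 / 2 - 1)) := fun u ⟨hu₀, hu₁⟩ ↦ by
    rw [sqrt_mul_rpow_mul_rpow (by positivity) hu₀ (sub_pos.2 hu₁),
      sqrt_Gamma_div_mul_Gamma_div hΓ.le ha hb]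
    ring_nf
  rw [setIntegral_congr_fun measurableSet_Ioo hpointwise, integral_const_mul,
    setIntegral_Ioo_rpow_mul_one_sub_rpow (by linarith) (by linarith), ProbabilityTheory.beta,
    show a + 1 / 2 + (b + 1 / 2) = a + b + 1 by ring]
  field_simp
end

section
/- Fix r with 0 < r < 1 and define, for k > 0, φ(k) = (Γ(kr + 1/2)/(√(kr) · Γ(kr))) · (Γ(k(1-r) + 1/2)/(√(k(1-r)) · Γ(k(1-r)))), where Γ is the real Gamma function. Then φ is strictly monotonically increasing in k on the interval k > max{1/(2r), 1/(2(1-r))}. -/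
/-!
Each factor of `φ` is `Γ(x + 1/2) / (√x Γ(x)) = exp h(x)` with
`h(x) = log Γ(x + 1/2) - (log Γ(x) + log Γ(x + 1)) / 2`, so it suffices that `h` is strictly
increasing on `(0, ∞)`. Gauss's limit formula for `log Γ` (the `n log n` terms cancel) writes
`h(x)` as the limit of `∑_{m ≤ n} c(x + m)` with `c(t) = ½ log (1 - 1/(2t + 1)²)`, and `c` is
strictly increasing, so `h(y) - h(x) ≥ c(y) - c(x) > 0` for `0 < x < y`.
-/

open Real Filter Set Topology

namespace Real

noncomputable def logMidpointDefect (t : ℝ) : ℝ := (log t + log (t + 1)) / 2 - log (t + 1 / 2)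

noncomputable def logGammaMidpointDefect (x : ℝ) : ℝ :=
  log (Gamma (x + 1 / 2)) - (log (Gamma x) + log (Gamma (x + 1))) / 2

theorem two_mul_logMidpointDefect {t : ℝ} (ht : 0 < t) :
    2 * logMidpointDefect t = log (1 - 1 / (2 * t + 1) ^ 2) := by
  have key : 1 - 1 / (2 * t + 1) ^ 2 = t * (t + 1) / (t + 1 / 2) ^ 2 := by
    field_simp
    ring
  rw [logMidpointDefect, key, log_div (by positivity) (by positivity),
    log_mul ht.ne' (by positivity), log_pow]
  push_cast
  ring

theorem logMidpointDefect_strictMonoOn : StrictMonoOn logMidpointDefect (Ioi 0) := by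
  intro x (hx : 0 < x) y (hy : 0 < y) hxy
  suffices 2 * logMidpointDefect x < 2 * logMidpointDefect y by linarith
  rw [two_mul_logMidpointDefect hx, two_mul_logMidpointDefect hy]
  have hx' : 1 < (2 * x + 1) ^ 2 := by nlinarith
  refine log_lt_log (by rw [sub_pos]; exact (div_lt_one (by positivity)).2 hx') ?_
  gcongr

theorem logGammaSeq_midpointDefect (x : ℝ) (n : ℕ) :
    BohrMollerup.logGammaSeq (x + 1 / 2) n -
        (BohrMollerup.logGammaSeq x n + BohrMollerup.logGammaSeq (x + 1) n) / 2 =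
      ∑ m ∈ Finset.range (n + 1), logMidpointDefect (x + m) := by
  simp only [BohrMollerup.logGammaSeq, logMidpointDefect, Finset.sum_sub_distrib,
    ← Finset.sum_div, Finset.sum_add_distrib]
  ring_nf

theorem tendsto_sum_logMidpointDefect {x : ℝ} (hx : 0 < x) :
    Tendsto (fun n : ℕ ↦ ∑ m ∈ Finset.range (n + 1), logMidpointDefect (x + m)) atTop
      (𝓝 (logGammaMidpointDefect x)) := by
  simp_rw [← logGammaSeq_midpointDefect]
  exact (BohrMollerup.tendsto_log_gamma (by positivity)).sub
    (((BohrMollerup.tendsto_log_gamma hx).add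
      (BohrMollerup.tendsto_log_gamma (by positivity))).div_const 2)

theorem logGammaMidpointDefect_strictMonoOn : StrictMonoOn logGammaMidpointDefect (Ioi 0) := by
  intro x (hx : 0 < x) y (hy : 0 < y) hxy
  have hmono : ∀ m : ℕ, logMidpointDefect (x + m) ≤ logMidpointDefect (y + m) := fun m ↦
    (logMidpointDefect_strictMonoOn (by simp only [mem_Ioi]; positivity)
      (by simp only [mem_Ioi]; positivity) (by linarith)).le
  have hfirst : logMidpointDefect y - logMidpointDefect x ≤
      logGammaMidpointDefect y - logGammaMidpointDefect x := by
    refine ge_of_tendsto ((tendsto_sum_logMidpointDefect hy).sub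
      (tendsto_sum_logMidpointDefect hx)) (Eventually.of_forall fun n ↦ ?_)
    rw [← Finset.sum_sub_distrib]
    simpa using Finset.single_le_sum (fun m _ ↦ sub_nonneg.2 (hmono m))
      (Finset.mem_range.2 n.succ_pos)
  linarith [logMidpointDefect_strictMonoOn hx hy hxy]

theorem Gamma_add_half_div_sqrt_mul_Gamma {x : ℝ} (hx : 0 < x) :
    Gamma (x + 1 / 2) / (√x * Gamma x) = exp (logGammaMidpointDefect x) := by
  have hG := Gamma_pos_of_pos hx
  rw [logGammaMidpointDefect, Gamma_add_one hx.ne', log_mul hx.ne' hG.ne', exp_sub,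
    exp_log (Gamma_pos_of_pos (by positivity)), sqrt_eq_rpow, rpow_def_of_pos hx,
    show (log (Gamma x) + (log x + log (Gamma x))) / 2 = log x * (1 / 2) + log (Gamma x) by ring,
    exp_add, exp_log hG]

end Real

/-- For fixed treatment proportion `r ∈ (0,1)`, the Beta-overlap coefficient
`φ(k) = Γ(kr + 1/2)/(√(kr) Γ(kr)) · Γ(k(1-r) + 1/2)/(√(k(1-r)) Γ(k(1-r)))`
is strictly increasing on `k > max{1/(2r), 1/(2(1-r))}`. -/
theorem overlap_coefficient_strictMonoOn (r : ℝ) (hr0 : 0 < r) (hr1 : r < 1) :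
    StrictMonoOn
      (fun k : ℝ =>
        (Real.Gamma (k * r + 1 / 2) / (Real.sqrt (k * r) * Real.Gamma (k * r)))
          * (Real.Gamma (k * (1 - r) + 1 / 2)
              / (Real.sqrt (k * (1 - r)) * Real.Gamma (k * (1 - r)))))
      (Set.Ioi (max (1 / (2 * r)) (1 / (2 * (1 - r))))) := by
  have hs : 0 < 1 - r := sub_pos.2 hr1
  intro k (hk : _ < k) l _ hkl
  have hk0 : 0 < k := (lt_max_of_lt_left (by positivity)).trans hk
  have hl0 : 0 < l := hk0.trans hkl
  simp only [Gamma_add_half_div_sqrt_mul_Gamma (mul_pos hk0 hr0),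
    Gamma_add_half_div_sqrt_mul_Gamma (mul_pos hk0 hs),
    Gamma_add_half_div_sqrt_mul_Gamma (mul_pos hl0 hr0),
    Gamma_add_half_div_sqrt_mul_Gamma (mul_pos hl0 hs), ← exp_add, exp_lt_exp]
  have mono := logGammaMidpointDefect_strictMonoOn
  exact add_lt_add
    (mono (mul_pos hk0 hr0) (mul_pos hl0 hr0) (mul_lt_mul_of_pos_right hkl hr0))
    (mono (mul_pos hk0 hs) (mul_pos hl0 hs) (mul_lt_mul_of_pos_right hkl hs))
end

section
/- Let 0 < r < 1 and k > max{1/(2r), 1/(2(1-r))}. Then ∫_0^1 (r t^{kr-1} + (1-r) t^{k(1-r)-1}) / (1 + √t) dt − 1/k = (1/k) ∫_0^1 (u^{2kr} + u^{2k(1-r)}) / (1+u)^2 du, and in particular the left-hand side is strictly positive. -/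
/-!
Substituting `t = u²` turns `∫₀¹ a t^(a-1) / (1 + √t) dt` into `∫₀¹ 2a u^(2a-1) / (1 + u) du`, and
integrating by parts against `(1 + u)⁻¹`, with boundary term `1/2`, gives
`1/2 + ∫₀¹ u^(2a) / (1 + u)² du`. Taking `a = kr` and `a = k(1-r)` with weight `1/k`, the two
boundary terms add up to `1/k`, and what is left has a positive integrand.
-/

open MeasureTheory Set Real

lemma image_sq_Ioo_zero_one : (fun u : ℝ => u ^ 2) '' Ioo 0 1 = Ioo 0 1 := by
  ext t
  constructor
  · rintro ⟨u, ⟨hu0, hu1⟩, rfl⟩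
    exact ⟨by positivity, by nlinarith⟩
  · rintro ⟨ht0, ht1⟩
    exact ⟨√t, ⟨sqrt_pos.2 ht0, (sqrt_lt' one_pos).2 (by simpa using ht1)⟩, sq_sqrt ht0.le⟩

section SqSubstitution

variable {E : Type*} [NormedAddCommGroup E] [NormedSpace ℝ E]

lemma hasDerivWithinAt_sq_Ioo_zero_one :
    ∀ u ∈ Ioo (0 : ℝ) 1, HasDerivWithinAt (fun u : ℝ => u ^ 2) (2 * u) (Ioo 0 1) u := fun u _ => by
  simpa using (hasDerivAt_pow 2 u).hasDerivWithinAt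

lemma injOn_sq_Ioo_zero_one : InjOn (fun u : ℝ => u ^ 2) (Ioo 0 1) :=
  (pow_left_strictMonoOn₀ two_ne_zero).injOn.mono fun _ hu => le_of_lt hu.1

lemma abs_two_mul_smul_eqOn (g : ℝ → E) :
    EqOn (fun u : ℝ => |2 * u| • g (u ^ 2)) (fun u => (2 * u) • g (u ^ 2)) (Ioo 0 1) :=
  fun u hu => by simp only [abs_of_pos (by linarith [hu.1] : (0 : ℝ) < 2 * u)]

theorem integrableOn_Ioo_zero_one_comp_sq_iff (g : ℝ → E) :
    IntegrableOn (fun u => (2 * u) • g (u ^ 2)) (Ioo 0 1) ↔ IntegrableOn g (Ioo 0 1) := by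
  conv_rhs => rw [← image_sq_Ioo_zero_one, integrableOn_image_iff_integrableOn_abs_deriv_smul
    measurableSet_Ioo hasDerivWithinAt_sq_Ioo_zero_one injOn_sq_Ioo_zero_one]
  exact integrableOn_congr_fun (abs_two_mul_smul_eqOn g).symm measurableSet_Ioo

theorem integral_Ioo_zero_one_comp_sq (g : ℝ → E) :
    ∫ u in Ioo 0 1, (2 * u) • g (u ^ 2) = ∫ t in Ioo 0 1, g t := by
  conv_rhs => rw [← image_sq_Ioo_zero_one, integral_image_eq_integral_abs_deriv_smul
    measurableSet_Ioo hasDerivWithinAt_sq_Ioo_zero_one injOn_sq_Ioo_zero_one]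
  exact (setIntegral_congr_fun measurableSet_Ioo (abs_two_mul_smul_eqOn g)).symm

end SqSubstitution

theorem integrableOn_rpow_div_Ioo_zero_one {s : ℝ} (hs : -1 < s) {g : ℝ → ℝ}
    (hg : ContinuousOn g (Icc 0 1)) (hg0 : ∀ u ∈ Icc (0 : ℝ) 1, g u ≠ 0) :
    IntegrableOn (fun u => u ^ s / g u) (Ioo 0 1) :=
  ((intervalIntegral.integrableOn_Ioo_rpow_iff one_pos).2 hs).mul_continuousOn_of_subset
    (hg.inv₀ hg0) measurableSet_Ioo isCompact_Icc Ioo_subset_Icc_self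

theorem integrableOn_rpow_div_one_add_sq {s : ℝ} (hs : -1 < s) :
    IntegrableOn (fun u : ℝ => u ^ s / (1 + u) ^ 2) (Ioo 0 1) :=
  integrableOn_rpow_div_Ioo_zero_one hs (by fun_prop) fun u hu => by nlinarith [hu.1]

theorem hasDerivAt_rpow_div_one_add {c u : ℝ} (hu : 0 < u) :
    HasDerivAt (fun x => x ^ c / (1 + x)) (c * u ^ (c - 1) / (1 + u) - u ^ c / (1 + u) ^ 2) u := by
  refine ((hasDerivAt_rpow_const (Or.inl hu.ne')).fun_div ((hasDerivAt_id' u).const_add 1)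
    (by positivity : 1 + u ≠ 0)).congr_deriv ?_
  field_simp

theorem integral_mul_rpow_sub_one_div_one_add {c : ℝ} (hc : 0 < c) :
    ∫ u in Ioo 0 1, c * u ^ (c - 1) / (1 + u) = 1 / 2 + ∫ u in Ioo 0 1, u ^ c / (1 + u) ^ 2 := by
  have hf : IntegrableOn (fun u : ℝ => c * u ^ (c - 1) / (1 + u)) (Ioo 0 1) := by
    simp only [mul_div_assoc]
    exact (integrableOn_rpow_div_Ioo_zero_one (s := c - 1) (by linarith) (by fun_prop)
      fun u hu => by linarith [hu.1]).const_mul c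
  have hg := integrableOn_rpow_div_one_add_sq (s := c) (by linarith)
  have hFTC := intervalIntegral.integral_eq_sub_of_hasDerivAt_of_le zero_le_one
    (by fun_prop (disch := first | exact hc.le | (intro u hu; linarith [hu.1])))
    (fun u hu => hasDerivAt_rpow_div_one_add (c := c) hu.1)
    ((intervalIntegrable_iff_integrableOn_Ioo_of_le zero_le_one).2 (hf.sub hg))
  rw [intervalIntegral.integral_of_le zero_le_one, integral_Ioc_eq_integral_Ioo,
    integral_sub hf hg] at hFTC
  norm_num [zero_rpow hc.ne'] at hFTC
  linarith

lemma two_mul_smul_comp_sq_eqOn (a : ℝ) :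
    EqOn (fun u : ℝ => (2 * u) • (a * (u ^ 2) ^ (a - 1) / (1 + √(u ^ 2))))
      (fun u => 2 * a * u ^ (2 * a - 1) / (1 + u)) (Ioo 0 1) := fun u hu => by
  have hpow : u ^ (2 * a - 1) = u * (u ^ 2) ^ (a - 1) := by
    rw [show 2 * a - 1 = 1 + 2 * (a - 1) by ring, rpow_add hu.1, rpow_one, rpow_mul hu.1.le,
      rpow_two]
  simp only [smul_eq_mul, sqrt_sq hu.1.le, hpow]
  ring

theorem integrableOn_mul_rpow_sub_one_div_one_add_sqrt {a : ℝ} (ha : 0 < a) :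
    IntegrableOn (fun t => a * t ^ (a - 1) / (1 + √t)) (Ioo 0 1) := by
  rw [← integrableOn_Ioo_zero_one_comp_sq_iff,
    integrableOn_congr_fun (two_mul_smul_comp_sq_eqOn a) measurableSet_Ioo]
  simp only [mul_div_assoc]
  exact (integrableOn_rpow_div_Ioo_zero_one (s := 2 * a - 1) (by linarith) (by fun_prop)
    fun u hu => by linarith [hu.1]).const_mul (2 * a)

theorem integral_mul_rpow_sub_one_div_one_add_sqrt {a : ℝ} (ha : 0 < a) :
    ∫ t in Ioo 0 1, a * t ^ (a - 1) / (1 + √t)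
      = 1 / 2 + ∫ u in Ioo 0 1, u ^ (2 * a) / (1 + u) ^ 2 := by
  rw [← integral_Ioo_zero_one_comp_sq, setIntegral_congr_fun measurableSet_Ioo
    (two_mul_smul_comp_sq_eqOn a), integral_mul_rpow_sub_one_div_one_add (by linarith)]

theorem integral_add_rpow_sub_one_div_one_add_sqrt {a b : ℝ} (ha : 0 < a) (hb : 0 < b) :
    ∫ t in Ioo 0 1, (a * t ^ (a - 1) + b * t ^ (b - 1)) / (1 + √t)
      = 1 + ∫ u in Ioo 0 1, (u ^ (2 * a) + u ^ (2 * b)) / (1 + u) ^ 2 := by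
  simp only [add_div]
  rw [integral_add (integrableOn_mul_rpow_sub_one_div_one_add_sqrt ha)
      (integrableOn_mul_rpow_sub_one_div_one_add_sqrt hb),
    integral_add (integrableOn_rpow_div_one_add_sq (by linarith))
      (integrableOn_rpow_div_one_add_sq (by linarith)),
    integral_mul_rpow_sub_one_div_one_add_sqrt ha, integral_mul_rpow_sub_one_div_one_add_sqrt hb]
  ring

theorem integral_Ioo_pos_of_pos {f : ℝ → ℝ} {a b : ℝ} (hab : a < b) (hf : IntegrableOn f (Ioo a b))
    (hpos : ∀ x ∈ Ioo a b, 0 < f x) : 0 < ∫ x in Ioo a b, f x := by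
  rw [← integral_Ioc_eq_integral_Ioo, ← intervalIntegral.integral_of_le hab.le]
  exact intervalIntegral.intervalIntegral_pos_of_pos_on
    ((intervalIntegrable_iff_integrableOn_Ioo_of_le hab.le).2 hf) hpos hab

/-- The key integral identity (via the substitution `t = u²` and integration by parts) showing
that the derivative of the log Beta-overlap coefficient is positive:
`∫₀¹ (r t^{kr-1} + (1-r) t^{k(1-r)-1})/(1 + √t) dt − 1/k
  = (1/k) ∫₀¹ (u^{2kr} + u^{2k(1-r)})/(1+u)² du > 0`. -/
theorem overlap_derivative_integral_identity
    (r k : ℝ) (hr0 : 0 < r) (hr1 : r < 1)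
    (hk : max (1 / (2 * r)) (1 / (2 * (1 - r))) < k) :
    ((∫ t in Set.Ioo (0 : ℝ) 1,
        (r * t ^ (k * r - 1) + (1 - r) * t ^ (k * (1 - r) - 1)) / (1 + Real.sqrt t)) - 1 / k
      = (1 / k) * ∫ u in Set.Ioo (0 : ℝ) 1,
          (u ^ (2 * k * r) + u ^ (2 * k * (1 - r))) / (1 + u) ^ 2)
    ∧ 0 < (∫ t in Set.Ioo (0 : ℝ) 1,
        (r * t ^ (k * r - 1) + (1 - r) * t ^ (k * (1 - r) - 1)) / (1 + Real.sqrt t)) - 1 / k := by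
  have hk0 : 0 < k := (by positivity : 0 < 1 / (2 * r)).trans ((le_max_left _ _).trans_lt hk)
  have ha : 0 < k * r := by positivity
  have hb : 0 < k * (1 - r) := mul_pos hk0 (sub_pos.2 hr1)
  have hscale : ∫ t in Ioo 0 1, (r * t ^ (k * r - 1) + (1 - r) * t ^ (k * (1 - r) - 1)) / (1 + √t)
      = 1 / k * ∫ t in Ioo 0 1,
        (k * r * t ^ (k * r - 1) + k * (1 - r) * t ^ (k * (1 - r) - 1)) / (1 + √t) := by
    rw [← integral_const_mul]
    congr with t
    field_simp
  have hidentity : (∫ t in Ioo 0 1,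
        (r * t ^ (k * r - 1) + (1 - r) * t ^ (k * (1 - r) - 1)) / (1 + √t)) - 1 / k
      = 1 / k * ∫ u in Ioo (0 : ℝ) 1, (u ^ (2 * k * r) + u ^ (2 * k * (1 - r))) / (1 + u) ^ 2 := by
    rw [hscale, integral_add_rpow_sub_one_div_one_add_sqrt ha hb, mul_assoc 2 k r,
      mul_assoc 2 k (1 - r)]
    ring
  have hintegrable : IntegrableOn
      (fun u : ℝ => (u ^ (2 * k * r) + u ^ (2 * k * (1 - r))) / (1 + u) ^ 2) (Ioo 0 1) := by
    simp only [add_div]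
    exact (integrableOn_rpow_div_one_add_sq (by linarith [ha])).add
      (integrableOn_rpow_div_one_add_sq (by linarith [hb]))
  refine ⟨hidentity, hidentity ▸ mul_pos (one_div_pos.2 hk0) ?_⟩
  exact integral_Ioo_pos_of_pos zero_lt_one hintegrable fun u hu => by have := hu.1; positivity
end

section
/- Let W and ε be independent real random variables with W ~ N(μ_e, σ_e^2) and ε ~ N(0, σ_1^2), where σ_e > 0 and σ_1 ≥ 0, and let a ∈ ℝ. Then E[(a(W − μ_e) + ε)^2 · (1 + e^{−W})] = a^2 σ_e^2 + σ_1^2 + (a^2 σ_e^2 (σ_e^2 + 1) + σ_1^2) · exp(−μ_e + σ_e^2/2). -/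
/-!
Expanding the square, independence of `W` and `ε` splits the expectation into
`a² E[(W - μₑ)² (1 + e^{-W})] + E[1 + e^{-W}] E[ε²]`; the cross term vanishes since `E ε = 0`.
The weight `e^{-W}` is absorbed by exponential tilting: `e^{tx} N(μ, v)(dx)` is
`e^{μt + vt²/2} N(μ + vt, v)(dx)`, so at `t = -1` the weighted moments are ordinary moments
of `N(μₑ - σₑ², σₑ²)`.
-/

open MeasureTheory ProbabilityTheory
open scoped NNReal
open Real

namespace ProbabilityTheory

variable {μ : ℝ} {v : ℝ≥0}

lemma gaussianReal_tilted_mul (t : ℝ) :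
    (gaussianReal μ v).tilted (t * ·) = gaussianReal (μ + v * t) v := by
  have : IsProbabilityMeasure ((gaussianReal μ v).tilted (t * ·)) :=
    isProbabilityMeasure_tilted (integrable_exp_mul_gaussianReal t)
  refine Measure.ext_of_complexMGF_id_eq (funext fun z => ?_)
  have hmgf := congrFun (mgf_fun_id_gaussianReal (μ := μ) (v := v)) t
  rw [complexMGF_id_gaussianReal, complexMGF, integral_tilted_mul_eq_mgf, hmgf]
  calc ∫ x, (rexp (t * x) / rexp (μ * t + v * t ^ 2 / 2)) • Complex.exp (z * id x)
        ∂gaussianReal μ v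
      = (rexp (μ * t + v * t ^ 2 / 2) : ℂ)⁻¹ * complexMGF id (gaussianReal μ v) (z + t) := by
        rw [complexMGF, ← integral_const_mul]
        congr 1 with x
        simp only [Complex.real_smul, Complex.ofReal_div, Complex.ofReal_exp, id]
        rw [div_eq_inv_mul, mul_assoc, ← Complex.exp_add]
        push_cast; ring_nf
    _ = Complex.exp (z * ↑(μ + v * t) + v * z ^ 2 / 2) := by
        rw [complexMGF_id_gaussianReal, Complex.ofReal_exp, ← Complex.exp_neg, ← Complex.exp_add]
        push_cast; ring_nf

lemma integral_mul_exp_mul_gaussianReal (g : ℝ → ℝ) (t : ℝ) :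
    ∫ x, g x * rexp (t * x) ∂gaussianReal μ v
      = rexp (μ * t + v * t ^ 2 / 2) * ∫ x, g x ∂gaussianReal (μ + v * t) v := by
  rw [← gaussianReal_tilted_mul, integral_tilted_mul_eq_mgf, mgf_fun_id_gaussianReal,
    ← integral_const_mul]
  congr 1 with x
  rw [smul_eq_mul]
  field_simp

lemma integrable_mul_exp_mul_gaussianReal_iff {g : ℝ → ℝ} (t : ℝ) :
    Integrable (fun x => g x * rexp (t * x)) (gaussianReal μ v)
      ↔ Integrable g (gaussianReal (μ + v * t) v) := by
  rw [← gaussianReal_tilted_mul, integrable_tilted_iff (integrable_exp_mul_gaussianReal t)]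
  simp only [smul_eq_mul, mul_comm]

lemma integral_sq_gaussianReal : ∫ x, x ^ 2 ∂gaussianReal μ v = v + μ ^ 2 := by
  have h := variance_eq_sub (memLp_id_gaussianReal (μ := μ) (v := v) 2)
  simp only [variance_id_gaussianReal, Pi.pow_apply, id, integral_id_gaussianReal] at h
  linarith

lemma integral_sub_sq_gaussianReal (c : ℝ) :
    ∫ x, (x - c) ^ 2 ∂gaussianReal μ v = v + (μ - c) ^ 2 := by
  rw [← integral_sq_gaussianReal, ← gaussianReal_map_sub_const,
    integral_map (by fun_prop) (by fun_prop)]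

lemma integrable_sub_pow_gaussianReal (c : ℝ) (n : ℕ) :
    Integrable (fun x => (x - c) ^ n) (gaussianReal μ v) := by
  refine (integrable_norm_iff (by fun_prop)).1 ?_
  simpa [norm_pow] using
    ((memLp_id_gaussianReal (μ := μ) (v := v) n).sub (memLp_const c)).integrable_norm_pow'

lemma integrable_sub_pow_mul_one_add_exp_neg_gaussianReal (c : ℝ) (n : ℕ) :
    Integrable (fun x => (x - c) ^ n * (1 + rexp (-x))) (gaussianReal μ v) := by
  have h := (integrable_mul_exp_mul_gaussianReal_iff (μ := μ) (v := v) (g := (· - c) ^ n) (-1)).2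
    (integrable_sub_pow_gaussianReal c n)
  refine ((integrable_sub_pow_gaussianReal c n).add h).congr (ae_of_all _ fun x => ?_)
  simp only [Pi.add_apply, Pi.pow_apply, neg_one_mul]
  ring

lemma integral_one_add_exp_neg_gaussianReal :
    ∫ x, (1 + rexp (-x)) ∂gaussianReal μ v = 1 + rexp (-μ + v / 2) := by
  have h := integral_mul_exp_mul_gaussianReal (μ := μ) (v := v) (fun _ => 1) (-1)
  simp only [one_mul, neg_one_mul, integral_const, probReal_univ, smul_eq_mul, mul_one] at h
  rw [integral_add (integrable_const 1) (by simpa using integrable_exp_mul_gaussianReal (-1)), h]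
  simp only [integral_const, probReal_univ, smul_eq_mul, mul_one]
  ring_nf

lemma integral_sub_sq_mul_one_add_exp_neg_gaussianReal :
    ∫ x, (x - μ) ^ 2 * (1 + rexp (-x)) ∂gaussianReal μ v
      = v + v * (v + 1) * rexp (-μ + v / 2) := by
  have h := integral_mul_exp_mul_gaussianReal (μ := μ) (v := v) (fun x => (x - μ) ^ 2) (-1)
  have hi := (integrable_mul_exp_mul_gaussianReal_iff (μ := μ) (v := v)
    (g := fun x => (x - μ) ^ 2) (-1)).2 (integrable_sub_pow_gaussianReal μ 2)
  simp only [neg_one_mul] at h hi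
  simp_rw [mul_add, mul_one]
  rw [integral_add (integrable_sub_pow_gaussianReal μ 2) hi, h, integral_sub_sq_gaussianReal,
    integral_sub_sq_gaussianReal]
  ring_nf

lemma integral_add_sq_mul_of_indepFun {Ω α : Type*} [MeasurableSpace Ω] [MeasurableSpace α]
    {P : Measure Ω} [IsProbabilityMeasure P] {ν : Measure α} {κ : Measure ℝ}
    {W : Ω → α} {ε : Ω → ℝ} (hW : HasLaw W ν P) (hε : HasLaw ε κ P) (hindep : IndepFun W ε P)
    {F G : α → ℝ} (hF : Measurable F) (hG : Measurable G)
    (hF2G : Integrable (fun x => F x ^ 2 * G x) ν) (hFG : Integrable (fun x => F x * G x) ν)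
    (hGi : Integrable G ν) (hκ : MemLp id 2 κ) (hκ_mean : ∫ y, y ∂κ = 0) :
    ∫ ω, (F (W ω) + ε ω) ^ 2 * G (W ω) ∂P
      = ∫ x, F x ^ 2 * G x ∂ν + (∫ x, G x ∂ν) * ∫ y, y ^ 2 ∂κ := by
  have comp {f : α → ℝ} (hf : Integrable f ν) : Integrable (fun ω => f (W ω)) P :=
    (hW.map_eq ▸ hf).comp_aemeasurable hW.aemeasurable
  have hε2 : MemLp ε 2 P := (hε.map_eq ▸ hκ).comp_of_map hε.aemeasurable
  have indep_FG : IndepFun (fun ω => F (W ω) * G (W ω)) ε P :=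
    hindep.comp (hF.mul hG) measurable_id
  have indep_G : IndepFun (fun ω => G (W ω)) (fun ω => ε ω ^ 2) P :=
    hindep.comp hG (measurable_id.pow_const 2)
  have law {f : α → ℝ} (hf : Integrable f ν) : ∫ ω, f (W ω) ∂P = ∫ x, f x ∂ν :=
    hW.integral_comp hf.1
  have i1 := comp hF2G
  have i2 : Integrable (fun ω => 2 * (F (W ω) * G (W ω) * ε ω)) P :=
    (indep_FG.integrable_mul (comp hFG) (hε2.integrable one_le_two)).const_mul 2
  have i3 : Integrable (fun ω => G (W ω) * ε ω ^ 2) P :=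
    indep_G.integrable_mul (comp hGi) hε2.integrable_sq
  calc ∫ ω, (F (W ω) + ε ω) ^ 2 * G (W ω) ∂P
      = ∫ ω, F (W ω) ^ 2 * G (W ω) + 2 * (F (W ω) * G (W ω) * ε ω) + G (W ω) * ε ω ^ 2 ∂P :=
        integral_congr_ae (ae_of_all _ fun ω => by ring)
    _ = ∫ ω, F (W ω) ^ 2 * G (W ω) ∂P
          + 2 * ((∫ ω, F (W ω) * G (W ω) ∂P) * ∫ ω, ε ω ∂P)
          + (∫ ω, G (W ω) ∂P) * ∫ ω, ε ω ^ 2 ∂P := by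
        rw [integral_add (by exact i1.add i2) i3, integral_add i1 i2, integral_const_mul,
          indep_FG.integral_fun_mul_eq_mul_integral (comp hFG).1 hε2.1,
          indep_G.integral_fun_mul_eq_mul_integral (comp hGi).1 hε2.integrable_sq.1]
    _ = ∫ x, F x ^ 2 * G x ∂ν + (∫ x, G x ∂ν) * ∫ y, y ^ 2 ∂κ := by
        rw [law hF2G, law hGi, hε.integral_eq, hκ_mean, mul_zero, mul_zero, add_zero,
          ← hε.integral_comp (by fun_prop)]
        rfl

end ProbabilityTheory

theorem treated_arm_variance_term_general
    {Ω : Type*} [MeasurableSpace Ω] (P : Measure Ω) [IsProbabilityMeasure P]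
    (W ε : Ω → ℝ) (hW : Measurable W) (hε : Measurable ε)
    (hindep : IndepFun W ε P)
    (μₑ σₑ σ₁ a : ℝ)
    (hWlaw : Measure.map W P = gaussianReal μₑ ⟨σₑ ^ 2, sq_nonneg σₑ⟩)
    (hεlaw : Measure.map ε P = gaussianReal 0 ⟨σ₁ ^ 2, sq_nonneg σ₁⟩) :
    ∫ ω, (a * (W ω - μₑ) + ε ω) ^ 2 * (1 + Real.exp (-(W ω))) ∂P
      = a ^ 2 * σₑ ^ 2 + σ₁ ^ 2
        + (a ^ 2 * σₑ ^ 2 * (σₑ ^ 2 + 1) + σ₁ ^ 2) * Real.exp (-μₑ + σₑ ^ 2 / 2) := by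
  -- Named as `ℝ≥0`: the bare anonymous constructors are subtypes, on which `rw` fails.
  set v : ℝ≥0 := ⟨σₑ ^ 2, sq_nonneg σₑ⟩
  set s : ℝ≥0 := ⟨σ₁ ^ 2, sq_nonneg σ₁⟩
  have hpoly := integrable_sub_pow_mul_one_add_exp_neg_gaussianReal (μ := μₑ) (v := v) μₑ
  have hF2G := (hpoly 2).const_mul (a ^ 2)
  have hFG := (hpoly 1).const_mul a
  have hG := hpoly 0
  simp only [pow_one, pow_zero, one_mul, ← mul_assoc, ← mul_pow] at hF2G hFG hG
  have hF2G_val : ∫ x, (a * (x - μₑ)) ^ 2 * (1 + rexp (-x)) ∂gaussianReal μₑ v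
      = a ^ 2 * (v + v * (v + 1) * rexp (-μₑ + v / 2)) := by
    simp_rw [mul_pow, mul_assoc]
    rw [integral_const_mul, integral_sub_sq_mul_one_add_exp_neg_gaussianReal]
    ring
  rw [integral_add_sq_mul_of_indepFun ⟨hW.aemeasurable, hWlaw⟩ ⟨hε.aemeasurable, hεlaw⟩ hindep
    (by fun_prop) (by fun_prop) hF2G hFG hG (memLp_id_gaussianReal 2) integral_id_gaussianReal,
    hF2G_val, integral_one_add_exp_neg_gaussianReal, integral_sq_gaussianReal]
  rw [show (v : ℝ) = σₑ ^ 2 from rfl, show (s : ℝ) = σ₁ ^ 2 from rfl]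
  ring

/-- Treated-arm variance term: for independent `W ~ N(μₑ, σₑ²)` and `ε ~ N(0, σ₁²)`,
`E[(a(W − μₑ) + ε)² (1 + e^{−W})]
  = a²σₑ² + σ₁² + (a²σₑ²(σₑ² + 1) + σ₁²) exp(−μₑ + σₑ²/2)`. -/
theorem treated_arm_variance_term
    {Ω : Type*} [MeasurableSpace Ω] (P : Measure Ω) [IsProbabilityMeasure P]
    (W ε : Ω → ℝ) (hW : Measurable W) (hε : Measurable ε)
    (hindep : IndepFun W ε P)
    (μₑ σₑ σ₁ a : ℝ) (hσₑ : 0 < σₑ) (hσ₁ : 0 ≤ σ₁)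
    (hWlaw : Measure.map W P = gaussianReal μₑ ⟨σₑ ^ 2, sq_nonneg σₑ⟩)
    (hεlaw : Measure.map ε P = gaussianReal 0 ⟨σ₁ ^ 2, sq_nonneg σ₁⟩) :
    ∫ ω, (a * (W ω - μₑ) + ε ω) ^ 2 * (1 + Real.exp (-(W ω))) ∂P
      = a ^ 2 * σₑ ^ 2 + σ₁ ^ 2
        + (a ^ 2 * σₑ ^ 2 * (σₑ ^ 2 + 1) + σ₁ ^ 2) * Real.exp (-μₑ + σₑ ^ 2 / 2) :=
  treated_arm_variance_term_general P W ε hW hε hindep μₑ σₑ σ₁ a hWlaw hεlaw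
end

section
/- Let Y, T, ε, W be square-integrable real random variables on a probability space with Y = T + ε, Cov(ε, W) = 0, Var(Y) > 0 and Var(W) > 0. Then Cov(Y, W)^2 / (Var(Y) · Var(W)) ≤ Var(T) / Var(Y). -/
/-!
Since `ε` is uncorrelated with `W`, `Cov(Y, W) = Cov(T, W)`, and Cauchy–Schwarz in `L²(P)` for the
centred variables gives `Cov(T, W)² ≤ Var T · Var W`; dividing by `Var Y · Var W` yields the bound.
-/

open MeasureTheory ProbabilityTheory

namespace MeasureTheory

variable {Ω : Type*} [MeasurableSpace Ω] {μ : Measure Ω} {f g : Ω → ℝ}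

lemma MemLp.inner_toLp_toLp (hf : MemLp f 2 μ) (hg : MemLp g 2 μ) :
    inner ℝ (hf.toLp f) (hg.toLp g) = ∫ ω, f ω * g ω ∂μ := by
  rw [L2.inner_def]
  refine integral_congr_ae ?_
  filter_upwards [hf.coeFn_toLp, hg.coeFn_toLp] with ω hfω hgω
  simp [hfω, hgω, mul_comm]

lemma sq_integral_mul_le_integral_sq_mul_integral_sq (hf : MemLp f 2 μ) (hg : MemLp g 2 μ) :
    (∫ ω, f ω * g ω ∂μ) ^ 2 ≤ (∫ ω, f ω ^ 2 ∂μ) * ∫ ω, g ω ^ 2 ∂μ := by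
  simpa only [MemLp.inner_toLp_toLp, ← sq] using
    real_inner_mul_inner_self_le (hf.toLp f) (hg.toLp g)

end MeasureTheory

namespace ProbabilityTheory

variable {Ω : Type*} [MeasurableSpace Ω] {μ : Measure Ω} [IsFiniteMeasure μ] {X Y Z : Ω → ℝ}

lemma sq_covariance_le_variance_mul_variance (hX : MemLp X 2 μ) (hY : MemLp Y 2 μ) :
    cov[X, Y; μ] ^ 2 ≤ Var[X; μ] * Var[Y; μ] := by
  rw [variance_eq_integral hX.aemeasurable, variance_eq_integral hY.aemeasurable]
  exact sq_integral_mul_le_integral_sq_mul_integral_sq (hX.sub (memLp_const _))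
    (hY.sub (memLp_const _))

lemma sq_covariance_add_div_le_of_covariance_eq_zero (hX : MemLp X 2 μ) (hZ : MemLp Z 2 μ)
    (hY : MemLp Y 2 μ) (hZY : cov[Z, Y; μ] = 0) :
    cov[X + Z, Y; μ] ^ 2 / (Var[X + Z; μ] * Var[Y; μ]) ≤ Var[X; μ] / Var[X + Z; μ] := by
  rw [covariance_add_left hX hZ hY, hZY, add_zero, mul_comm, ← div_div]
  refine div_le_div_of_nonneg_right ?_ (variance_nonneg _ μ)
  exact div_le_of_le_mul₀ (variance_nonneg Y μ) (variance_nonneg X μ)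
    (sq_covariance_le_variance_mul_variance hX hY)

end ProbabilityTheory

theorem squared_correlation_le_rsquared_general
    {Ω : Type*} [MeasurableSpace Ω] (P : Measure Ω) [IsProbabilityMeasure P]
    (Y T ε W : Ω → ℝ)
    (hT : MemLp T 2 P) (hε : MemLp ε 2 P) (hW : MemLp W 2 P)
    (hsum : ∀ ω, Y ω = T ω + ε ω)
    (hcov : ∫ ω, (ε ω - ∫ ω', ε ω' ∂P) * (W ω - ∫ ω', W ω' ∂P) ∂P = 0) :
    (∫ ω, (Y ω - ∫ ω', Y ω' ∂P) * (W ω - ∫ ω', W ω' ∂P) ∂P) ^ 2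
        / ((∫ ω, (Y ω - ∫ ω', Y ω' ∂P) ^ 2 ∂P) * ∫ ω, (W ω - ∫ ω', W ω' ∂P) ^ 2 ∂P)
      ≤ (∫ ω, (T ω - ∫ ω', T ω' ∂P) ^ 2 ∂P) / ∫ ω, (Y ω - ∫ ω', Y ω' ∂P) ^ 2 ∂P := by
  obtain rfl : Y = T + ε := funext hsum
  have key := sq_covariance_add_div_le_of_covariance_eq_zero hT hε hW hcov
  rwa [variance_eq_integral (hT.add hε).aemeasurable, variance_eq_integral hW.aemeasurable,
    variance_eq_integral hT.aemeasurable] at key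

/-- The squared correlation `ρ² = Cov(Y, W)²/(Var Y · Var W)` is bounded by the R-squared
statistic `Var T / Var Y` when `Y = T + ε` and `ε` is uncorrelated with `W`. -/
theorem squared_correlation_le_rsquared
    {Ω : Type*} [MeasurableSpace Ω] (P : Measure Ω) [IsProbabilityMeasure P]
    (Y T ε W : Ω → ℝ)
    (hY : MemLp Y 2 P) (hT : MemLp T 2 P) (hε : MemLp ε 2 P) (hW : MemLp W 2 P)
    (hsum : ∀ ω, Y ω = T ω + ε ω)
    (hcov : ∫ ω, (ε ω - ∫ ω', ε ω' ∂P) * (W ω - ∫ ω', W ω' ∂P) ∂P = 0)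
    (hVarY : 0 < ∫ ω, (Y ω - ∫ ω', Y ω' ∂P) ^ 2 ∂P)
    (hVarW : 0 < ∫ ω, (W ω - ∫ ω', W ω' ∂P) ^ 2 ∂P) :
    (∫ ω, (Y ω - ∫ ω', Y ω' ∂P) * (W ω - ∫ ω', W ω' ∂P) ∂P) ^ 2
        / ((∫ ω, (Y ω - ∫ ω', Y ω' ∂P) ^ 2 ∂P) * ∫ ω, (W ω - ∫ ω', W ω' ∂P) ^ 2 ∂P)
      ≤ (∫ ω, (T ω - ∫ ω', T ω' ∂P) ^ 2 ∂P) / ∫ ω, (Y ω - ∫ ω', Y ω' ∂P) ^ 2 ∂P :=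
  squared_correlation_le_rsquared_general P Y T ε W hT hε hW hsum hcov
end
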